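/- arXiv:2307.01081 — 3 statements merged into one kernel-verified Lean document; each statement's English description precedes it below -/
import Mathlib

section
/- Let N_f be a positive integer, Δf > 0 and f₁ > 0 be real numbers with 2·f₁ > (N_f − 1)·Δf, and define frequencies f_n = f₁ + (n−1)·Δf for n = 1, …, N_f. For any complex weights c₁, …, c_{N_f}, the time average (1/T) ∫₀^T ( Σ_{n=1}^{N_f} Re(c_n · e^{i2πf_n t}) )⁴ dt converges, as T → ∞, to (3/8) · Σ_{(n₀,n₁,n₂,n₃): n₀+n₁ = n₂+n₃} Re( c_{n₀} c_{n₁} conj(c_{n₂}) conj(c_{n₃}) ), where the sum is over all quadruples of indices in {1,…,N_f} with n₀+n₁ = n₂+n₃. -/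
open Filter Complex Real
set_option maxHeartbeats 1000000

noncomputable def Ee (ρ t : ℝ) : ℂ := Complex.exp (ρ * t * Complex.I)

lemma Ee_cont (ρ : ℝ) : Continuous (Ee ρ) := by
  unfold Ee; fun_prop

lemma Ee_intble (K : ℂ) (ρ a b : ℝ) :
    IntervalIntegrable (fun t => K * Ee ρ t) MeasureTheory.volume a b :=
  (continuous_const.mul (by unfold Ee; fun_prop)).intervalIntegrable a b

lemma avg_exp (ρ : ℝ) :
    Tendsto (fun T : ℝ => ((1 / T : ℝ) : ℂ) * ∫ t in (0:ℝ)..T, Ee ρ t) atTop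
      (nhds (if ρ = 0 then 1 else 0)) := by
  by_cases hρ : ρ = 0
  · simp only [hρ, if_pos]
    have h1 : (fun T : ℝ => ((1 / T : ℝ) : ℂ) * ∫ t in (0:ℝ)..T, Ee 0 t)
        =ᶠ[atTop] fun _ => (1:ℂ) := by
      filter_upwards [eventually_ge_atTop (1:ℝ)] with T hT
      have hT0 : T ≠ 0 := by linarith
      simp [Ee, intervalIntegral.integral_const]
      exact inv_mul_cancel₀ (Complex.ofReal_ne_zero.mpr hT0)
    exact tendsto_const_nhds.congr' h1.symm
  · simp only [if_neg hρ]
    have hc : (ρ : ℂ) * Complex.I ≠ 0 := by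
      simp [Complex.ext_iff, hρ]
    have key : ∀ T : ℝ, (∫ t in (0:ℝ)..T, Ee ρ t)
        = (Complex.exp ((ρ : ℂ) * Complex.I * T) - 1) / ((ρ:ℂ) * Complex.I) := by
      intro T
      have : ∀ t : ℝ, Ee ρ t = Complex.exp ((ρ : ℂ) * Complex.I * t) := by
        intro t; unfold Ee; ring_nf
      simp only [this]
      rw [integral_exp_mul_complex hc]
      simp
    apply squeeze_zero_norm' (a := fun T : ℝ => (1/T) * (2 / ‖(ρ:ℂ) * Complex.I‖))
    · filter_upwards [eventually_ge_atTop (1:ℝ)] with T hT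
      rw [key]
      have hT0 : 0 < T := by linarith
      rw [norm_mul, norm_div]
      have h2 : ‖Complex.exp ((ρ:ℂ) * Complex.I * T) - 1‖ ≤ 2 := by
        calc ‖Complex.exp ((ρ:ℂ) * Complex.I * T) - 1‖
            ≤ ‖Complex.exp ((ρ:ℂ) * Complex.I * T)‖ + ‖(1:ℂ)‖ := norm_sub_le _ _
          _ ≤ 2 := by
              rw [Complex.norm_exp]
              simp [mul_comm, Complex.mul_re]
              norm_num
      have h3 : ‖((1/T : ℝ):ℂ)‖ = 1/T := by
        rw [Complex.norm_real, Real.norm_eq_abs, abs_of_pos (by positivity)]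
      rw [h3]
      have hpos : 0 < ‖(ρ:ℂ) * Complex.I‖ := norm_pos_iff.mpr hc
      gcongr
    · have h4 : Tendsto (fun T : ℝ => 1/T) atTop (nhds 0) := by
        simpa [one_div] using tendsto_inv_atTop_zero
      simpa using h4.mul_const (2 / ‖(ρ:ℂ) * Complex.I‖)

lemma avg_term (a : ℂ) (ρ : ℝ) :
    Tendsto (fun T : ℝ => ((1 / T : ℝ) : ℂ) * ∫ t in (0:ℝ)..T, a * Ee ρ t) atTop
      (nhds (if ρ = 0 then a else 0)) := by
  have h1 : ∀ T : ℝ, ((1 / T : ℝ) : ℂ) * ∫ t in (0:ℝ)..T, a * Ee ρ t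
      = a * (((1 / T : ℝ) : ℂ) * ∫ t in (0:ℝ)..T, Ee ρ t) := by
    intro T
    rw [intervalIntegral.integral_const_mul]; ring
  simp only [h1]
  have := (avg_exp ρ).const_mul a
  convert this using 2
  split <;> simp

noncomputable def ww (Δf f₁ : ℝ) {Nf : ℕ} (n : Fin Nf) : ℝ :=
  2 * Real.pi * (f₁ + (n : ℕ) * Δf)

noncomputable def uu {Nf : ℕ} (c : Fin Nf → ℂ) (w : Fin Nf → ℝ) (n : Fin Nf) (t : ℝ) : ℂ :=
  c n * Ee (w n) t

noncomputable def vv {Nf : ℕ} (c : Fin Nf → ℂ) (w : Fin Nf → ℝ) (n : Fin Nf) (t : ℝ) : ℂ :=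
  (starRingEnd ℂ) (c n) * Ee (-(w n)) t

noncomputable def FF {Nf : ℕ} (c : Fin Nf → ℂ) (w : Fin Nf → ℝ) (a b d e : Fin Nf) (t : ℝ) : ℂ :=
  (1/16) * (uu c w a t * uu c w b t * uu c w d t * uu c w e t
    + 4 * (uu c w a t * uu c w b t * uu c w d t * vv c w e t)
    + 6 * (uu c w a t * uu c w b t * vv c w d t * vv c w e t)
    + 4 * (uu c w a t * vv c w b t * vv c w d t * vv c w e t)
    + vv c w a t * vv c w b t * vv c w d t * vv c w e t)

lemma FF_cont {Nf : ℕ} (c : Fin Nf → ℂ) (w : Fin Nf → ℝ) (a b d e : Fin Nf) :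
    Continuous (FF c w a b d e) := by
  unfold FF uu vv Ee; fun_prop

lemma conj_Ee (ρ t : ℝ) : (starRingEnd ℂ) (Ee ρ t) = Ee (-ρ) t := by
  simp only [Ee, ← Complex.exp_conj]
  congr 1
  simp [Complex.conj_I]

lemma expand4 {ι : Type*} (s : Finset ι) (u v : ι → ℂ) :
    ((∑ x ∈ s, u x) + (∑ x ∈ s, v x))^4
    = ∑ a ∈ s, ∑ b ∈ s, ∑ d ∈ s, ∑ e ∈ s,
      (u a * u b * u d * u e + 4 * (u a * u b * u d * v e)
        + 6 * (u a * u b * v d * v e) + 4 * (u a * v b * v d * v e)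
        + v a * v b * v d * v e) := by
  simp only [Finset.sum_add_distrib, ← Finset.sum_mul, ← Finset.mul_sum]
  ring

lemma four_mul_Ee (k1 k2 k3 k4 : ℂ) (r1 r2 r3 r4 t : ℝ) :
    (k1 * Ee r1 t) * (k2 * Ee r2 t) * (k3 * Ee r3 t) * (k4 * Ee r4 t)
    = (k1 * k2 * k3 * k4) * Ee (r1 + r2 + r3 + r4) t := by
  have h : Ee r1 t * Ee r2 t * Ee r3 t * Ee r4 t = Ee (r1+r2+r3+r4) t := by
    simp only [Ee, ← Complex.exp_add]
    congr 1
    push_cast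
    ring
  calc (k1 * Ee r1 t) * (k2 * Ee r2 t) * (k3 * Ee r3 t) * (k4 * Ee r4 t)
      = (k1 * k2 * k3 * k4) * (Ee r1 t * Ee r2 t * Ee r3 t * Ee r4 t) := by ring
    _ = _ := by rw [h]

lemma FF_eq {Nf : ℕ} (c : Fin Nf → ℂ) (w : Fin Nf → ℝ) (a b d e : Fin Nf) (t : ℝ) :
    FF c w a b d e t
    = (1/16) * (c a * c b * c d * c e) * Ee (w a + w b + w d + w e) t
      + (4/16) * (c a * c b * c d * (starRingEnd ℂ) (c e)) * Ee (w a + w b + w d + -(w e)) t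
      + (6/16) * (c a * c b * (starRingEnd ℂ) (c d) * (starRingEnd ℂ) (c e))
          * Ee (w a + w b + -(w d) + -(w e)) t
      + (4/16) * (c a * (starRingEnd ℂ) (c b) * (starRingEnd ℂ) (c d) * (starRingEnd ℂ) (c e))
          * Ee (w a + -(w b) + -(w d) + -(w e)) t
      + (1/16) * ((starRingEnd ℂ) (c a) * (starRingEnd ℂ) (c b) * (starRingEnd ℂ) (c d)
          * (starRingEnd ℂ) (c e)) * Ee (-(w a) + -(w b) + -(w d) + -(w e)) t := by
  simp only [FF, uu, vv, four_mul_Ee]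
  ring

lemma FF_lim {Nf : ℕ} (Δf f₁ : ℝ) (hΔf : 0 < Δf) (hf₁ : 0 < f₁)
    (hNB : 2 * f₁ > ((Nf : ℝ) - 1) * Δf) (c : Fin Nf → ℂ) (a b d e : Fin Nf) :
    Tendsto (fun T : ℝ => ((1 / T : ℝ) : ℂ) * ∫ t in (0:ℝ)..T, FF c (ww Δf f₁) a b d e t)
      atTop
      (nhds (if (a:ℕ) + (b:ℕ) = (d:ℕ) + (e:ℕ) then
        (3/8 : ℂ) * (c a * c b * (starRingEnd ℂ) (c d) * (starRingEnd ℂ) (c e)) else 0)) := by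
  set w : Fin Nf → ℝ := ww Δf f₁ with hw
  have hπ := Real.pi_pos
  have hwlb : ∀ n : Fin Nf, 2 * Real.pi * f₁ ≤ w n := by
    intro n
    have h0 : (0:ℝ) ≤ ((n:ℕ):ℝ) := Nat.cast_nonneg _
    simp only [hw, ww]
    nlinarith [mul_nonneg h0 hΔf.le]
  have hwub : ∀ n : Fin Nf, w n < 2 * Real.pi * (3 * f₁) := by
    intro n
    have h0 : ((n:ℕ):ℝ) + 1 ≤ (Nf:ℝ) := by exact_mod_cast n.isLt
    have h1 : ((n:ℕ):ℝ) * Δf ≤ ((Nf:ℝ) - 1) * Δf := by nlinarith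
    simp only [hw, ww]
    nlinarith
  set K1 : ℂ := (1/16) * (c a * c b * c d * c e) with hK1
  set K2 : ℂ := (4/16) * (c a * c b * c d * (starRingEnd ℂ) (c e)) with hK2
  set K3 : ℂ := (6/16) * (c a * c b * (starRingEnd ℂ) (c d) * (starRingEnd ℂ) (c e)) with hK3
  set K4 : ℂ := (4/16) * (c a * (starRingEnd ℂ) (c b) * (starRingEnd ℂ) (c d) * (starRingEnd ℂ) (c e)) with hK4
  set K5 : ℂ := (1/16) * ((starRingEnd ℂ) (c a) * (starRingEnd ℂ) (c b) * (starRingEnd ℂ) (c d) * (starRingEnd ℂ) (c e)) with hK5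
  have hfun : ∀ T : ℝ, ((1 / T : ℝ) : ℂ) * ∫ t in (0:ℝ)..T, FF c w a b d e t
      = ((1 / T : ℝ) : ℂ) * (∫ t in (0:ℝ)..T, K1 * Ee (w a + w b + w d + w e) t)
        + ((1 / T : ℝ) : ℂ) * (∫ t in (0:ℝ)..T, K2 * Ee (w a + w b + w d + -(w e)) t)
        + ((1 / T : ℝ) : ℂ) * (∫ t in (0:ℝ)..T, K3 * Ee (w a + w b + -(w d) + -(w e)) t)
        + ((1 / T : ℝ) : ℂ) * (∫ t in (0:ℝ)..T, K4 * Ee (w a + -(w b) + -(w d) + -(w e)) t)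
        + ((1 / T : ℝ) : ℂ) * (∫ t in (0:ℝ)..T, K5 * Ee (-(w a) + -(w b) + -(w d) + -(w e)) t) := by
    intro T
    have : (fun t => FF c w a b d e t) = fun t =>
        K1 * Ee (w a + w b + w d + w e) t
        + K2 * Ee (w a + w b + w d + -(w e)) t
        + K3 * Ee (w a + w b + -(w d) + -(w e)) t
        + K4 * Ee (w a + -(w b) + -(w d) + -(w e)) t
        + K5 * Ee (-(w a) + -(w b) + -(w d) + -(w e)) t := by
      funext t; exact FF_eq c w a b d e t
    rw [this]
    have i1 := Ee_intble K1 (w a + w b + w d + w e) 0 T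
    have i2 := Ee_intble K2 (w a + w b + w d + -(w e)) 0 T
    have i3 := Ee_intble K3 (w a + w b + -(w d) + -(w e)) 0 T
    have i4 := Ee_intble K4 (w a + -(w b) + -(w d) + -(w e)) 0 T
    have i5 := Ee_intble K5 (-(w a) + -(w b) + -(w d) + -(w e)) 0 T
    rw [intervalIntegral.integral_add (((i1.add i2).add i3).add i4) i5,
      intervalIntegral.integral_add ((i1.add i2).add i3) i4,
      intervalIntegral.integral_add (i1.add i2) i3,
      intervalIntegral.integral_add i1 i2]
    ring
  simp only [hfun]
  have hT := ((((avg_term K1 (w a + w b + w d + w e)).add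
    (avg_term K2 (w a + w b + w d + -(w e)))).add
    (avg_term K3 (w a + w b + -(w d) + -(w e)))).add
    (avg_term K4 (w a + -(w b) + -(w d) + -(w e)))).add
    (avg_term K5 (-(w a) + -(w b) + -(w d) + -(w e)))
  have h1 : ¬ (w a + w b + w d + w e = 0) := by
    have := hwlb a; have := hwlb b; have := hwlb d; have := hwlb e; nlinarith
  have h2 : ¬ (w a + w b + w d + -(w e) = 0) := by
    have := hwlb a; have := hwlb b; have := hwlb d; have := hwub e; nlinarith
  have h4 : ¬ (w a + -(w b) + -(w d) + -(w e) = 0) := by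
    have := hwub a; have := hwlb b; have := hwlb d; have := hwlb e; nlinarith
  have h5 : ¬ (-(w a) + -(w b) + -(w d) + -(w e) = 0) := by
    have := hwlb a; have := hwlb b; have := hwlb d; have := hwlb e; nlinarith
  have h3 : (w a + w b + -(w d) + -(w e) = 0) ↔ ((a:ℕ) + (b:ℕ) = (d:ℕ) + (e:ℕ)) := by
    have hfac : w a + w b + -(w d) + -(w e)
        = (2 * Real.pi * Δf) * ((((a:ℕ):ℝ) + ((b:ℕ):ℝ)) - (((d:ℕ):ℝ) + ((e:ℕ):ℝ))) := by
      simp only [hw, ww]; ring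
    rw [hfac]
    constructor
    · intro h
      have hne : (2 * Real.pi * Δf) ≠ 0 := by positivity
      have := (mul_eq_zero.mp h).resolve_left hne
      have hr : (((a:ℕ):ℝ) + ((b:ℕ):ℝ)) = (((d:ℕ):ℝ) + ((e:ℕ):ℝ)) := by linarith
      exact_mod_cast hr
    · intro h
      have hr : (((a:ℕ):ℝ) + ((b:ℕ):ℝ)) = (((d:ℕ):ℝ) + ((e:ℕ):ℝ)) := by exact_mod_cast h
      rw [hr]; ring
  rw [if_neg h1, if_neg h2, if_neg h4, if_neg h5] at hT
  by_cases hcond : (a:ℕ) + (b:ℕ) = (d:ℕ) + (e:ℕ)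
  · rw [if_pos (h3.mpr hcond)] at hT
    rw [if_pos hcond]
    convert hT using 1
    rw [hK3]
    norm_num
  · rw [if_neg (fun hh => hcond (h3.mp hh))] at hT
    rw [if_neg hcond]
    convert hT using 1
    simp

/-- Fourth-moment identity for a multi-tone signal: under the narrowband
condition `2·f₁ > (N_f − 1)·Δf`, the time average of the fourth power of
`y(t) = Σ_n Re(c_n e^{i2πf_n t})` converges to
`(3/8) Σ_{n₀+n₁=n₂+n₃} Re(c_{n₀} c_{n₁} conj(c_{n₂}) conj(c_{n₃}))`. -/
theorem time_average_fourth_power_multitone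
    (Nf : ℕ) (hNf : 0 < Nf) (Δf f₁ : ℝ) (hΔf : 0 < Δf) (hf₁ : 0 < f₁)
    (hNB : 2 * f₁ > ((Nf : ℝ) - 1) * Δf)
    (c : Fin Nf → ℂ) :
    Tendsto
      (fun T : ℝ => (1 / T) *
        ∫ t in (0:ℝ)..T,
          (∑ n : Fin Nf,
            (c n * Complex.exp
              (((2 * Real.pi * (f₁ + (n : ℕ) * Δf) * t : ℝ) : ℂ) * Complex.I)).re) ^ 4)
      atTop
      (nhds ((3 / 8) *
        ∑ n₀ : Fin Nf, ∑ n₁ : Fin Nf, ∑ n₂ : Fin Nf, ∑ n₃ : Fin Nf,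
          if (n₀ : ℕ) + (n₁ : ℕ) = (n₂ : ℕ) + (n₃ : ℕ) then
            (c n₀ * c n₁ * (starRingEnd ℂ) (c n₂) * (starRingEnd ℂ) (c n₃)).re
          else 0)) := by
  set w : Fin Nf → ℝ := ww Δf f₁ with hwdef
  set y : ℝ → ℝ := fun t => ∑ n : Fin Nf,
      (c n * Complex.exp
        (((2 * Real.pi * (f₁ + (n : ℕ) * Δf) * t : ℝ) : ℂ) * Complex.I)).re with hydef
  have hy : ∀ t : ℝ, ((y t : ℝ) : ℂ)
      = (1/2) * ((∑ n : Fin Nf, uu c w n t) + (∑ n : Fin Nf, vv c w n t)) := by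
    intro t
    rw [hydef]
    rw [Complex.ofReal_sum]
    rw [← Finset.sum_add_distrib, Finset.mul_sum]
    refine Finset.sum_congr rfl fun n _ => ?_
    have hz : (c n * Complex.exp
        (((2 * Real.pi * (f₁ + (n : ℕ) * Δf) * t : ℝ) : ℂ) * Complex.I)) = uu c w n t := by
      simp only [uu, Ee, hwdef, ww]
      congr 1
      push_cast
      ring
    rw [hz]
    have hconj : (starRingEnd ℂ) (uu c w n t) = vv c w n t := by
      simp only [uu, vv, map_mul, conj_Ee]
    rw [← hconj, Complex.add_conj]
    push_cast
    ring
  have hy4 : ∀ t : ℝ, ((y t ^ 4 : ℝ) : ℂ)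
      = ∑ a : Fin Nf, ∑ b : Fin Nf, ∑ d : Fin Nf, ∑ e : Fin Nf, FF c w a b d e t := by
    intro t
    rw [Complex.ofReal_pow, hy t]
    have h14 : ((1:ℂ)/2 * ((∑ n : Fin Nf, uu c w n t) + (∑ n : Fin Nf, vv c w n t)))^4
        = (1/16) * (((∑ n : Fin Nf, uu c w n t) + (∑ n : Fin Nf, vv c w n t))^4) := by ring
    rw [h14, expand4]
    simp only [Finset.mul_sum, FF]
  have hfint : ∀ (a b d e : Fin Nf) (T : ℝ),
      IntervalIntegrable (FF c w a b d e) MeasureTheory.volume 0 T :=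
    fun a b d e T => (FF_cont c w a b d e).intervalIntegrable 0 T
  have hcont3 : ∀ a b d : Fin Nf, Continuous (fun t => ∑ e : Fin Nf, FF c w a b d e t) :=
    fun a b d => continuous_finset_sum _ (fun e _ => FF_cont c w a b d e)
  have hcont2 : ∀ a b : Fin Nf, Continuous (fun t => ∑ d : Fin Nf, ∑ e : Fin Nf, FF c w a b d e t) :=
    fun a b => continuous_finset_sum _ (fun d _ => hcont3 a b d)
  have hcont1 : ∀ a : Fin Nf, Continuous (fun t => ∑ b : Fin Nf, ∑ d : Fin Nf, ∑ e : Fin Nf, FF c w a b d e t) :=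
    fun a => continuous_finset_sum _ (fun b _ => hcont2 a b)
  have hsum : ∀ T : ℝ, ((1 / T : ℝ) : ℂ) *
      ∫ t in (0:ℝ)..T, ∑ a : Fin Nf, ∑ b : Fin Nf, ∑ d : Fin Nf, ∑ e : Fin Nf, FF c w a b d e t
      = ∑ a : Fin Nf, ∑ b : Fin Nf, ∑ d : Fin Nf, ∑ e : Fin Nf,
          ((1 / T : ℝ) : ℂ) * ∫ t in (0:ℝ)..T, FF c w a b d e t := by
    intro T
    rw [intervalIntegral.integral_finset_sum
      (f := fun (a : Fin Nf) (t : ℝ) => ∑ b : Fin Nf, ∑ d : Fin Nf, ∑ e : Fin Nf, FF c w a b d e t)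
      (fun a _ => (hcont1 a).intervalIntegrable 0 T)]
    simp only [Finset.mul_sum]
    refine Finset.sum_congr rfl fun a _ => ?_
    rw [intervalIntegral.integral_finset_sum
      (f := fun (b : Fin Nf) (t : ℝ) => ∑ d : Fin Nf, ∑ e : Fin Nf, FF c w a b d e t)
      (fun b _ => (hcont2 a b).intervalIntegrable 0 T)]
    simp only [Finset.mul_sum]
    refine Finset.sum_congr rfl fun b _ => ?_
    rw [intervalIntegral.integral_finset_sum
      (f := fun (d : Fin Nf) (t : ℝ) => ∑ e : Fin Nf, FF c w a b d e t)
      (fun d _ => (hcont3 a b d).intervalIntegrable 0 T)]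
    simp only [Finset.mul_sum]
    refine Finset.sum_congr rfl fun d _ => ?_
    rw [intervalIntegral.integral_finset_sum
      (f := fun (e : Fin Nf) (t : ℝ) => FF c w a b d e t)
      (fun e _ => hfint a b d e T)]
    simp only [Finset.mul_sum]
  have hC : Tendsto (fun T : ℝ => ((1 / T : ℝ) : ℂ) *
      ∫ t in (0:ℝ)..T, ∑ a : Fin Nf, ∑ b : Fin Nf, ∑ d : Fin Nf, ∑ e : Fin Nf, FF c w a b d e t)
      atTop
      (nhds (∑ a : Fin Nf, ∑ b : Fin Nf, ∑ d : Fin Nf, ∑ e : Fin Nf,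
        if (a:ℕ) + (b:ℕ) = (d:ℕ) + (e:ℕ) then
          (3/8 : ℂ) * (c a * c b * (starRingEnd ℂ) (c d) * (starRingEnd ℂ) (c e)) else 0)) := by
    rw [tendsto_congr hsum]
    exact tendsto_finset_sum _ fun a _ => tendsto_finset_sum _ fun b _ =>
      tendsto_finset_sum _ fun d _ => tendsto_finset_sum _ fun e _ =>
        FF_lim Δf f₁ hΔf hf₁ hNB c a b d e
  have hre : ∀ T : ℝ, (1 / T) * (∫ t in (0:ℝ)..T, (y t) ^ 4)
      = (((1 / T : ℝ) : ℂ) *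
        ∫ t in (0:ℝ)..T, ∑ a : Fin Nf, ∑ b : Fin Nf, ∑ d : Fin Nf, ∑ e : Fin Nf,
          FF c w a b d e t).re := by
    intro T
    have h2 : (∫ t in (0:ℝ)..T, ∑ a : Fin Nf, ∑ b : Fin Nf, ∑ d : Fin Nf, ∑ e : Fin Nf,
        FF c w a b d e t) = (((∫ t in (0:ℝ)..T, (y t) ^ 4 : ℝ)) : ℂ) := by
      rw [← intervalIntegral.integral_ofReal]
      apply intervalIntegral.integral_congr
      intro t _
      exact (hy4 t).symm
    rw [h2, ← Complex.ofReal_mul, Complex.ofReal_re]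
  have final := (Complex.continuous_re.tendsto _).comp hC
  have final2 : Tendsto (fun T : ℝ => (1 / T) * (∫ t in (0:ℝ)..T, (y t) ^ 4)) atTop
      (nhds ((∑ a : Fin Nf, ∑ b : Fin Nf, ∑ d : Fin Nf, ∑ e : Fin Nf,
        if (a:ℕ) + (b:ℕ) = (d:ℕ) + (e:ℕ) then
          (3/8 : ℂ) * (c a * c b * (starRingEnd ℂ) (c d) * (starRingEnd ℂ) (c e)) else 0).re)) := by
    exact final.congr fun T => (hre T).symm
  have hval : (∑ a : Fin Nf, ∑ b : Fin Nf, ∑ d : Fin Nf, ∑ e : Fin Nf,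
        if (a:ℕ) + (b:ℕ) = (d:ℕ) + (e:ℕ) then
          (3/8 : ℂ) * (c a * c b * (starRingEnd ℂ) (c d) * (starRingEnd ℂ) (c e)) else 0).re
      = (3 / 8) * ∑ n₀ : Fin Nf, ∑ n₁ : Fin Nf, ∑ n₂ : Fin Nf, ∑ n₃ : Fin Nf,
          if (n₀ : ℕ) + (n₁ : ℕ) = (n₂ : ℕ) + (n₃ : ℕ) then
            (c n₀ * c n₁ * (starRingEnd ℂ) (c n₂) * (starRingEnd ℂ) (c n₃)).re
          else 0 := by
    rw [Finset.mul_sum]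
    rw [Complex.re_sum]
    refine Finset.sum_congr rfl fun a _ => ?_
    rw [Finset.mul_sum, Complex.re_sum]
    refine Finset.sum_congr rfl fun b _ => ?_
    rw [Finset.mul_sum, Complex.re_sum]
    refine Finset.sum_congr rfl fun d _ => ?_
    rw [Finset.mul_sum, Complex.re_sum]
    refine Finset.sum_congr rfl fun e _ => ?_
    split
    · rw [show (3/8 : ℂ) = ((3/8 : ℝ) : ℂ) by norm_num]
      simp
    · simp
  rw [← hval]
  exact final2
end

section
/- (Theorem 1.) Let N_f, N_v, N_h be positive integers, Δf > 0 and f₁ > 0 real with frequencies f_n = f₁ + (n−1)·Δf for n = 1, …, N_f, and let G be a real number. Let ω_{i,n} (i = 1,…,N_v; n = 1,…,N_f), q_{i,l} and h_{i,l} (i = 1,…,N_v; l = 1,…,N_h) be complex numbers, and define the radiated signals x_{i,l}(t) = G · Σ_{n=1}^{N_f} Re( h_{i,l} q_{i,l} ω_{i,n} e^{i2πf_n t} ). Then the limit superior, as T → ∞, of Σ_{i=1}^{N_v} (1/T) ∫₀^T √( Σ_{l=1}^{N_h} x_{i,l}(t)² ) dt is at most Σ_{i=1}^{N_v} √( Σ_{l=1}^{N_h}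 Σ_{n=1}^{N_f} (G²/2) |ω_{i,n} q_{i,l} h_{i,l}|² ). -/
open Filter Complex Real MeasureTheory intervalIntegral

lemma intervalIntegral_re (F : ℝ → ℂ) (a b : ℝ) (hF : IntervalIntegrable F volume a b) :
    ∫ t in a..b, (F t).re = (∫ t in a..b, F t).re := by
  rw [intervalIntegral_eq_integral_uIoc, intervalIntegral_eq_integral_uIoc]
  simp only [← RCLike.re_to_complex]
  rw [integral_re (by rw [intervalIntegrable_iff] at hF; exact hF)]
  simp [RCLike.re_to_complex, Complex.real_smul]
  split <;> simp

lemma osc_bound (μ : ℝ) (hμ : μ ≠ 0) (z : ℂ) (T : ℝ) :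
    |∫ t in (0:ℝ)..T, (z * Complex.exp (((μ * t : ℝ) : ℂ) * Complex.I)).re| ≤
      2 * ‖z‖ / |μ| := by
  set c : ℂ := (μ : ℂ) * Complex.I with hc
  have hcne : c ≠ 0 := by
    simp [hc, Complex.ext_iff, hμ]
  have h1 : ∀ t : ℝ, ((μ * t : ℝ) : ℂ) * Complex.I = c * t := by
    intro t; push_cast; ring
  have hcont : Continuous fun t : ℝ => z * Complex.exp (c * t) := by fun_prop
  have h2 : ∫ t in (0:ℝ)..T, (z * Complex.exp (((μ * t : ℝ) : ℂ) * Complex.I)).re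
      = (z * ((Complex.exp (c * T) - Complex.exp (c * 0)) / c)).re := by
    rw [show (fun t : ℝ => (z * Complex.exp (((μ * t : ℝ) : ℂ) * Complex.I)).re)
        = fun t : ℝ => (z * Complex.exp (c * t)).re from funext fun t => by rw [h1]]
    rw [intervalIntegral_re _ _ _ (hcont.intervalIntegrable _ _)]
    rw [intervalIntegral.integral_const_mul, integral_exp_mul_complex hcne]
    norm_num
  rw [h2]
  have h3 : ‖Complex.exp (c * T) - Complex.exp (c * 0)‖ ≤ 2 := by
    calc ‖Complex.exp (c * T) - Complex.exp (c * 0)‖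
        ≤ ‖Complex.exp (c * T)‖ + ‖Complex.exp (c * 0)‖ := by
          simpa using norm_sub_le (Complex.exp (c * T)) (Complex.exp (c * 0))
      _ ≤ 2 := by
          rw [Complex.norm_exp, Complex.norm_exp]
          norm_num [hc]
  calc |(z * ((Complex.exp (c * T) - Complex.exp (c * 0)) / c)).re|
      ≤ ‖z * ((Complex.exp (c * T) - Complex.exp (c * 0)) / c)‖ :=
        Complex.abs_re_le_norm _
    _ = ‖z‖ * (‖Complex.exp (c * T) - Complex.exp (c * 0)‖ / ‖c‖) := by
        simp [map_mul, map_div₀]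
    _ ≤ ‖z‖ * (2 / |μ|) := by
        have habs : ‖c‖ = |μ| := by simp [hc]
        rw [habs]
        gcongr
    _ = 2 * ‖z‖ / |μ| := by ring

lemma re_mul_re (z w : ℂ) : z.re * w.re = ((z * w).re + (z * (starRingEnd ℂ) w).re) / 2 := by
  simp [Complex.mul_re, Complex.conj_re, Complex.conj_im]

lemma pair_eq (a b : ℝ) (z w : ℂ) (T : ℝ) :
    ∫ t in (0:ℝ)..T,
        (z * Complex.exp (((a * t : ℝ) : ℂ) * Complex.I)).re *
        (w * Complex.exp (((b * t : ℝ) : ℂ) * Complex.I)).re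
    = (1/2) * (∫ t in (0:ℝ)..T, (z * w * Complex.exp ((((a + b) * t : ℝ) : ℂ) * Complex.I)).re)
      + (1/2) * (∫ t in (0:ℝ)..T,
          (z * (starRingEnd ℂ) w * Complex.exp ((((a - b) * t : ℝ) : ℂ) * Complex.I)).re) := by
  have hpt : ∀ t : ℝ,
      (z * Complex.exp (((a * t : ℝ) : ℂ) * Complex.I)).re *
        (w * Complex.exp (((b * t : ℝ) : ℂ) * Complex.I)).re
      = (1/2) * (z * w * Complex.exp ((((a + b) * t : ℝ) : ℂ) * Complex.I)).re
        + (1/2) * (z * (starRingEnd ℂ) w * Complex.exp ((((a - b) * t : ℝ) : ℂ) * Complex.I)).re := by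
    intro t
    rw [re_mul_re]
    have e1 : z * Complex.exp (((a * t : ℝ) : ℂ) * Complex.I) *
        (w * Complex.exp (((b * t : ℝ) : ℂ) * Complex.I))
        = z * w * Complex.exp ((((a + b) * t : ℝ) : ℂ) * Complex.I) := by
      rw [mul_mul_mul_comm, ← Complex.exp_add]
      congr 1
      push_cast; ring
    have e2 : z * Complex.exp (((a * t : ℝ) : ℂ) * Complex.I) *
        (starRingEnd ℂ) (w * Complex.exp (((b * t : ℝ) : ℂ) * Complex.I))
        = z * (starRingEnd ℂ) w * Complex.exp ((((a - b) * t : ℝ) : ℂ) * Complex.I) := by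
      rw [map_mul, ← Complex.exp_conj]
      rw [mul_mul_mul_comm, ← Complex.exp_add]
      congr 2
      simp [Complex.ext_iff]
      ring
    rw [e1, e2]
    ring
  simp only [hpt]
  rw [intervalIntegral.integral_add, intervalIntegral.integral_const_mul,
    intervalIntegral.integral_const_mul]
  · exact (Continuous.intervalIntegrable (by fun_prop) _ _)
  · exact (Continuous.intervalIntegrable (by fun_prop) _ _)

lemma sq_integral_bound (Nf : ℕ) (μ : Fin Nf → ℝ) (hpos : ∀ n, 0 < μ n)
    (hinj : ∀ n m : Fin Nf, n ≠ m → μ n ≠ μ m) (c : Fin Nf → ℂ) :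
    ∃ C : ℝ, ∀ T : ℝ,
      (∫ t in (0:ℝ)..T,
        (∑ n : Fin Nf, (c n * Complex.exp (((μ n * t : ℝ) : ℂ) * Complex.I)).re) ^ 2)
      ≤ T * (∑ n : Fin Nf, ‖c n‖ ^ 2 / 2) + C := by
  classical
  set K : Fin Nf → Fin Nf → ℝ := fun n m =>
    (1/2) * (2 * ‖c n * c m‖ / |μ n + μ m|)
      + (if n = m then 0 else
          (1/2) * (2 * ‖c n * (starRingEnd ℂ) (c m)‖ / |μ n - μ m|)) with hK
  refine ⟨∑ n : Fin Nf, ∑ m : Fin Nf, K n m, fun T => ?_⟩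
  have hcont : ∀ n : Fin Nf,
      Continuous fun t : ℝ => (c n * Complex.exp (((μ n * t : ℝ) : ℂ) * Complex.I)).re := by
    intro n; fun_prop
  have hsq : ∀ t : ℝ,
      (∑ n : Fin Nf, (c n * Complex.exp (((μ n * t : ℝ) : ℂ) * Complex.I)).re) ^ 2
      = ∑ n : Fin Nf, ∑ m : Fin Nf,
          (c n * Complex.exp (((μ n * t : ℝ) : ℂ) * Complex.I)).re *
          (c m * Complex.exp (((μ m * t : ℝ) : ℂ) * Complex.I)).re := by
    intro t
    rw [sq, Finset.sum_mul_sum]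
  have hswap : (∫ t in (0:ℝ)..T,
        (∑ n : Fin Nf, (c n * Complex.exp (((μ n * t : ℝ) : ℂ) * Complex.I)).re) ^ 2)
      = ∑ n : Fin Nf, ∑ m : Fin Nf, ∫ t in (0:ℝ)..T,
          (c n * Complex.exp (((μ n * t : ℝ) : ℂ) * Complex.I)).re *
          (c m * Complex.exp (((μ m * t : ℝ) : ℂ) * Complex.I)).re := by
    simp only [hsq]
    rw [intervalIntegral.integral_finset_sum]
    · refine Finset.sum_congr rfl fun n _ => ?_
      rw [intervalIntegral.integral_finset_sum]
      intro m _
      exact ((hcont n).mul (hcont m)).intervalIntegrable _ _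
    · intro n _
      exact Continuous.intervalIntegrable (by continuity) _ _
  rw [hswap]
  have hterm : ∀ n m : Fin Nf,
      (∫ t in (0:ℝ)..T,
          (c n * Complex.exp (((μ n * t : ℝ) : ℂ) * Complex.I)).re *
          (c m * Complex.exp (((μ m * t : ℝ) : ℂ) * Complex.I)).re)
      ≤ (if n = m then T * (‖c n‖ ^ 2 / 2) else 0) + K n m := by
    intro n m
    rw [pair_eq]
    have h1 : (1/2) * (∫ t in (0:ℝ)..T,
        (c n * c m * Complex.exp ((((μ n + μ m) * t : ℝ) : ℂ) * Complex.I)).re)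
        ≤ (1/2) * (2 * ‖c n * c m‖ / |μ n + μ m|) := by
      have := osc_bound (μ n + μ m)
        (ne_of_gt (by have := hpos n; have := hpos m; linarith)) (c n * c m) T
      nlinarith [abs_le.mp this]
    by_cases hnm : n = m
    · subst hnm
      have h2 : (∫ t in (0:ℝ)..T,
          (c n * (starRingEnd ℂ) (c n) *
            Complex.exp ((((μ n - μ n) * t : ℝ) : ℂ) * Complex.I)).re)
          = T * ‖c n‖ ^ 2 := by
        have : ∀ t : ℝ, (c n * (starRingEnd ℂ) (c n) *
            Complex.exp ((((μ n - μ n) * t : ℝ) : ℂ) * Complex.I)).re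
            = ‖c n‖ ^ 2 := by
          intro t
          simp [Complex.mul_conj, Complex.normSq_eq_norm_sq, ← Complex.ofReal_pow]
        simp only [this]
        simp
      rw [h2]
      have hKnn : K n n = (1/2) * (2 * ‖c n * c n‖ / |μ n + μ n|) := by
        simp [hK]
      rw [hKnn, if_pos rfl]
      linarith
    · have h2 : (1/2) * (∫ t in (0:ℝ)..T,
          (c n * (starRingEnd ℂ) (c m) *
            Complex.exp ((((μ n - μ m) * t : ℝ) : ℂ) * Complex.I)).re)
          ≤ (1/2) * (2 * ‖c n * (starRingEnd ℂ) (c m)‖ / |μ n - μ m|) := by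
        have := osc_bound (μ n - μ m) (sub_ne_zero.mpr (hinj n m hnm)) (c n * (starRingEnd ℂ) (c m)) T
        nlinarith [abs_le.mp this]
      simp only [hK, if_neg hnm]
      linarith
  calc ∑ n : Fin Nf, ∑ m : Fin Nf, ∫ t in (0:ℝ)..T,
          (c n * Complex.exp (((μ n * t : ℝ) : ℂ) * Complex.I)).re *
          (c m * Complex.exp (((μ m * t : ℝ) : ℂ) * Complex.I)).re
      ≤ ∑ n : Fin Nf, ∑ m : Fin Nf,
          ((if n = m then T * (‖c n‖ ^ 2 / 2) else 0) + K n m) :=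
        Finset.sum_le_sum fun n _ => Finset.sum_le_sum fun m _ => hterm n m
    _ = T * (∑ n : Fin Nf, ‖c n‖ ^ 2 / 2) + ∑ n : Fin Nf, ∑ m : Fin Nf, K n m := by
        simp only [Finset.sum_add_distrib]
        congr 1
        rw [Finset.mul_sum]
        refine Finset.sum_congr rfl fun n _ => ?_
        simp [Finset.sum_ite_eq]

lemma avg_le_sqrt_avg_sq (g : ℝ → ℝ) (hg : Continuous g) (hgnn : ∀ t, 0 ≤ g t)
    (T : ℝ) (hT : 0 < T) :
    (1 / T) * ∫ t in (0:ℝ)..T, g t ≤ Real.sqrt ((1 / T) * ∫ t in (0:ℝ)..T, (g t) ^ 2) := by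
  set A := ∫ t in (0:ℝ)..T, g t with hA
  set B := ∫ t in (0:ℝ)..T, (g t) ^ 2 with hB
  have hAnn : 0 ≤ A := intervalIntegral.integral_nonneg hT.le fun t _ => hgnn t
  have hint1 : IntervalIntegrable g volume 0 T := hg.intervalIntegrable _ _
  have hint2 : IntervalIntegrable (fun t => (g t) ^ 2) volume 0 T :=
    (hg.pow 2).intervalIntegrable _ _
  have key : 0 ≤ B - A ^ 2 / T := by
    have h0 : (0:ℝ) ≤ ∫ t in (0:ℝ)..T, (g t - A / T) ^ 2 :=
      intervalIntegral.integral_nonneg hT.le fun t _ => sq_nonneg _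
    have hexp : (∫ t in (0:ℝ)..T, (g t - A / T) ^ 2)
        = B - 2 * (A / T) * A + (A / T) ^ 2 * T := by
      have : ∀ t : ℝ, (g t - A / T) ^ 2
          = (g t) ^ 2 - 2 * (A / T) * g t + (A / T) ^ 2 := fun t => by ring
      simp only [this]
      rw [intervalIntegral.integral_add (hint2.sub (hint1.const_mul _))
        (intervalIntegrable_const),
        intervalIntegral.integral_sub hint2 (hint1.const_mul _),
        intervalIntegral.integral_const_mul, intervalIntegral.integral_const]
      simp [← hA, ← hB]
      ring
    rw [hexp] at h0
    have : B - 2 * (A / T) * A + (A / T) ^ 2 * T = B - A ^ 2 / T := by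
      field_simp; ring
    linarith [this ▸ h0]
  have hle : ((1 / T) * A) ^ 2 ≤ (1 / T) * B := by
    have hT2 : 0 < T ^ 2 := by positivity
    rw [mul_pow]
    have : A ^ 2 ≤ T * B := by
      have := mul_le_mul_of_nonneg_left key hT.le
      have h2 : T * (B - A ^ 2 / T) = T * B - A ^ 2 := by field_simp
      nlinarith
    calc (1 / T) ^ 2 * A ^ 2 ≤ (1 / T) ^ 2 * (T * B) := by
          apply mul_le_mul_of_nonneg_left this (by positivity)
      _ = (1 / T) * B := by field_simp
  have hx : 0 ≤ (1 / T) * A := by positivity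
  have hBnn : 0 ≤ B := intervalIntegral.integral_nonneg hT.le fun t _ => sq_nonneg _
  exact (Real.le_sqrt hx (by positivity)).mpr hle

/-- Theorem 1: the long-run time average (limit superior) of the HPA
power-consumption term `Σ_i (1/T)∫₀^T √(Σ_l x_{i,l}(t)²) dt` for the DMA
radiated signals `x_{i,l}(t) = G·Σ_n Re(h_{i,l} q_{i,l} ω_{i,n} e^{i2πf_n t})`
is at most `Σ_i √(Σ_l Σ_n (G²/2)|ω_{i,n} q_{i,l} h_{i,l}|²)`. -/
theorem hpa_power_upper_bound
    (Nf Nv Nh : ℕ) (hNf : 0 < Nf) (hNv : 0 < Nv) (hNh : 0 < Nh)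
    (Δf f₁ : ℝ) (hΔf : 0 < Δf) (hf₁ : 0 < f₁) (G : ℝ)
    (ω : Fin Nv → Fin Nf → ℂ) (q h : Fin Nv → Fin Nh → ℂ)
    (x : Fin Nv → Fin Nh → ℝ → ℝ)
    (hx : ∀ i l t, x i l t =
      G * ∑ n : Fin Nf,
        (h i l * q i l * ω i n *
          Complex.exp
            (((2 * Real.pi * (f₁ + (n : ℕ) * Δf) * t : ℝ) : ℂ) * Complex.I)).re) :
    Filter.limsup
      (fun T : ℝ => ∑ i : Fin Nv,
        (1 / T) * ∫ t in (0:ℝ)..T, Real.sqrt (∑ l : Fin Nh, (x i l t) ^ 2))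
      atTop
    ≤ ∑ i : Fin Nv,
        Real.sqrt (∑ l : Fin Nh, ∑ n : Fin Nf,
          (G ^ 2 / 2) * ‖ω i n * q i l * h i l‖ ^ 2) := by
  classical
  set μ : Fin Nf → ℝ := fun n => 2 * Real.pi * (f₁ + (n : ℕ) * Δf) with hμ
  have hpos : ∀ n, 0 < μ n := by
    intro n
    have : (0:ℝ) ≤ (n : ℕ) * Δf := by positivity
    have hπ := Real.pi_pos
    simp only [hμ]
    nlinarith
  have hinj : ∀ n m : Fin Nf, n ≠ m → μ n ≠ μ m := by
    intro n m hnm heq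
    simp only [hμ] at heq
    have hπ := Real.pi_pos
    have h2 : ((n : ℕ) : ℝ) * Δf = ((m : ℕ) : ℝ) * Δf := by nlinarith
    have h3 : (n : ℕ) = (m : ℕ) := by
      have := mul_right_cancel₀ (ne_of_gt hΔf) h2
      exact_mod_cast this
    exact hnm (Fin.ext h3)
  -- continuity of x
  have hxc : ∀ i l, Continuous (x i l) := by
    intro i l
    rw [show x i l = fun t => G * ∑ n : Fin Nf,
        (h i l * q i l * ω i n *
          Complex.exp (((2 * Real.pi * (f₁ + (n : ℕ) * Δf) * t : ℝ) : ℂ) * Complex.I)).re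
      from funext (hx i l)]
    fun_prop
  -- per (i,l) bound on ∫ x²
  have hbound : ∀ i l, ∃ C : ℝ, ∀ T : ℝ,
      (∫ t in (0:ℝ)..T, (x i l t) ^ 2)
        ≤ T * (∑ n : Fin Nf, (G ^ 2 / 2) * ‖ω i n * q i l * h i l‖ ^ 2) + C := by
    intro i l
    obtain ⟨C0, hC0⟩ := sq_integral_bound Nf μ hpos hinj (fun n => h i l * q i l * ω i n)
    refine ⟨G ^ 2 * C0, fun T => ?_⟩
    have hxt : ∀ t : ℝ, (x i l t) ^ 2
        = G ^ 2 * (∑ n : Fin Nf,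
            ((h i l * q i l * ω i n) *
              Complex.exp (((μ n * t : ℝ) : ℂ) * Complex.I)).re) ^ 2 := by
      intro t
      rw [hx i l t, mul_pow]
    have hint : (∫ t in (0:ℝ)..T, (x i l t) ^ 2)
        = G ^ 2 * ∫ t in (0:ℝ)..T, (∑ n : Fin Nf,
            ((h i l * q i l * ω i n) *
              Complex.exp (((μ n * t : ℝ) : ℂ) * Complex.I)).re) ^ 2 := by
      simp only [hxt]
      rw [intervalIntegral.integral_const_mul]
    rw [hint]
    have hCS := hC0 T
    have habs : ∀ n : Fin Nf, ‖h i l * q i l * ω i n‖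
        = ‖ω i n * q i l * h i l‖ := by
      intro n; rw [show h i l * q i l * ω i n = ω i n * q i l * h i l from by ring]
    calc G ^ 2 * ∫ t in (0:ℝ)..T, (∑ n : Fin Nf,
            ((h i l * q i l * ω i n) *
              Complex.exp (((μ n * t : ℝ) : ℂ) * Complex.I)).re) ^ 2
        ≤ G ^ 2 * (T * (∑ n : Fin Nf, ‖h i l * q i l * ω i n‖ ^ 2 / 2) + C0) := by
          apply mul_le_mul_of_nonneg_left hCS (by positivity)
      _ = T * (∑ n : Fin Nf, (G ^ 2 / 2) * ‖ω i n * q i l * h i l‖ ^ 2)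
            + G ^ 2 * C0 := by
          simp only [habs]
          rw [show ∀ s : ℝ, G ^ 2 * (T * s + C0) = T * (G ^ 2 * s) + G ^ 2 * C0
            from fun s => by ring]
          congr 2
          rw [Finset.mul_sum]
          exact Finset.sum_congr rfl fun n _ => by ring
  choose C hC using hbound
  set S : Fin Nv → ℝ := fun i => ∑ l : Fin Nh, ∑ n : Fin Nf,
      (G ^ 2 / 2) * ‖ω i n * q i l * h i l‖ ^ 2 with hS
  set Ci : Fin Nv → ℝ := fun i => ∑ l : Fin Nh, C i l with hCi
  -- main pointwise bound for T > 0
  have hmain : ∀ T : ℝ, 0 < T →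
      (∑ i : Fin Nv, (1 / T) * ∫ t in (0:ℝ)..T,
          Real.sqrt (∑ l : Fin Nh, (x i l t) ^ 2))
      ≤ ∑ i : Fin Nv, Real.sqrt (S i + Ci i / T) := by
    intro T hT
    refine Finset.sum_le_sum fun i _ => ?_
    have hgc : Continuous fun t => Real.sqrt (∑ l : Fin Nh, (x i l t) ^ 2) := by
      apply Real.continuous_sqrt.comp
      exact continuous_finset_sum _ fun l _ => (hxc i l).pow 2
    have hgnn : ∀ t, 0 ≤ Real.sqrt (∑ l : Fin Nh, (x i l t) ^ 2) :=
      fun t => Real.sqrt_nonneg _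
    refine le_trans (avg_le_sqrt_avg_sq _ hgc hgnn T hT) ?_
    apply Real.sqrt_le_sqrt
    have hsq : ∀ t : ℝ, (Real.sqrt (∑ l : Fin Nh, (x i l t) ^ 2)) ^ 2
        = ∑ l : Fin Nh, (x i l t) ^ 2 := by
      intro t
      exact Real.sq_sqrt (Finset.sum_nonneg fun l _ => sq_nonneg _)
    have hint : (∫ t in (0:ℝ)..T, (Real.sqrt (∑ l : Fin Nh, (x i l t) ^ 2)) ^ 2)
        = ∑ l : Fin Nh, ∫ t in (0:ℝ)..T, (x i l t) ^ 2 := by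
      simp only [hsq]
      rw [intervalIntegral.integral_finset_sum]
      intro l _
      exact ((hxc i l).pow 2).intervalIntegrable _ _
    rw [hint]
    have hsum : (∑ l : Fin Nh, ∫ t in (0:ℝ)..T, (x i l t) ^ 2) ≤ T * S i + Ci i := by
      calc (∑ l : Fin Nh, ∫ t in (0:ℝ)..T, (x i l t) ^ 2)
          ≤ ∑ l : Fin Nh,
              (T * (∑ n : Fin Nf, (G ^ 2 / 2) * ‖ω i n * q i l * h i l‖ ^ 2)
                + C i l) := Finset.sum_le_sum fun l _ => hC i l T
        _ = T * S i + Ci i := by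
            rw [Finset.sum_add_distrib, hS, hCi, Finset.mul_sum]
    calc (1 / T) * ∑ l : Fin Nh, ∫ t in (0:ℝ)..T, (x i l t) ^ 2
        ≤ (1 / T) * (T * S i + Ci i) := by
          apply mul_le_mul_of_nonneg_left hsum (by positivity)
      _ = S i + Ci i / T := by field_simp
  -- the comparison function tends to the claimed bound
  have hΦ : Tendsto (fun T : ℝ => ∑ i : Fin Nv, Real.sqrt (S i + Ci i / T)) atTop
      (nhds (∑ i : Fin Nv, Real.sqrt (S i))) := by
    apply tendsto_finset_sum
    intro i _
    have h1 : Tendsto (fun T : ℝ => S i + Ci i / T) atTop (nhds (S i + 0)) :=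
      tendsto_const_nhds.add (Tendsto.div_atTop tendsto_const_nhds tendsto_id)
    have h2 := (Real.continuous_sqrt.tendsto (S i + 0)).comp h1
    simpa [Function.comp_def] using h2
  have hev : ∀ᶠ T in atTop,
      (∑ i : Fin Nv, (1 / T) * ∫ t in (0:ℝ)..T,
          Real.sqrt (∑ l : Fin Nh, (x i l t) ^ 2))
      ≤ ∑ i : Fin Nv, Real.sqrt (S i + Ci i / T) :=
    (eventually_gt_atTop 0).mono fun T hT => hmain T hT
  have h0 : ∀ᶠ T in atTop, (0:ℝ) ≤
      ∑ i : Fin Nv, (1 / T) * ∫ t in (0:ℝ)..T,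
          Real.sqrt (∑ l : Fin Nh, (x i l t) ^ 2) := by
    refine (eventually_gt_atTop 0).mono fun T hT => ?_
    refine Finset.sum_nonneg fun i _ => ?_
    have : 0 ≤ ∫ t in (0:ℝ)..T, Real.sqrt (∑ l : Fin Nh, (x i l t) ^ 2) :=
      intervalIntegral.integral_nonneg hT.le fun t _ => Real.sqrt_nonneg _
    positivity
  refine le_of_le_of_eq
    (Filter.limsup_le_limsup hev
      (Filter.isCoboundedUnder_le_of_eventually_le atTop h0)
      hΦ.isBoundedUnder_le) hΦ.limsup_eq
end

section
/- Let N_f and N be positive integers and let ℓ₁, …, ℓ_{N_f} : ℂ^N → ℂ be complex-linear functionals. Then the function w ↦ Σ_{(n₀,n₁,n₂,n₃): n₀+n₁ = n₂+n₃} Re( ℓ_{n₀}(w)·ℓ_{n₁}(w)·conj(ℓ_{n₂}(w))·conj(ℓ_{n₃}(w)) ), where the sum runs over all quadruples of indices in {1,…,N_f} with n₀+n₁ = n₂+n₃, is convex on ℂ^N viewed as a real vector space. -/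
open Finset Complex

lemma aux_convexOn_sum {ι E : Type*} [AddCommGroup E] [Module ℝ E]
    (t : Finset ι) (f : ι → E → ℝ)
    (h : ∀ i ∈ t, ConvexOn ℝ Set.univ (f i)) :
    ConvexOn ℝ Set.univ (fun x => ∑ i ∈ t, f i x) := by
  classical
  induction t using Finset.induction_on with
  | empty => simpa using convexOn_const (0 : ℝ) convex_univ
  | insert _ _ hnotmem ih =>
    rename_i a s
    simp only [Finset.sum_insert hnotmem]
    exact (h a (Finset.mem_insert_self a s)).add
      (ih fun i hi => h i (Finset.mem_insert_of_mem hi))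

/-- Convexity of the spectral quartic form: for complex-linear functionals
`ℓ₁, …, ℓ_{N_f}` on `ℂ^N`, the function
`w ↦ Σ_{n₀+n₁=n₂+n₃} Re(ℓ_{n₀}(w) ℓ_{n₁}(w) conj(ℓ_{n₂}(w)) conj(ℓ_{n₃}(w)))`
is convex on `ℂ^N` viewed as a real vector space. -/
theorem convex_spectral_quartic_form
    (Nf N : ℕ) (hNf : 0 < Nf) (hN : 0 < N)
    (ℓ : Fin Nf → (Fin N → ℂ) →ₗ[ℂ] ℂ) :
    ConvexOn ℝ Set.univ
      (fun w : Fin N → ℂ =>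
        ∑ n₀ : Fin Nf, ∑ n₁ : Fin Nf, ∑ n₂ : Fin Nf, ∑ n₃ : Fin Nf,
          if (n₀ : ℕ) + (n₁ : ℕ) = (n₂ : ℕ) + (n₃ : ℕ) then
            (ℓ n₀ w * ℓ n₁ w * (starRingEnd ℂ) (ℓ n₂ w) *
              (starRingEnd ℂ) (ℓ n₃ w)).re
          else 0) := by
  classical
  set M : ℕ := 2 * Nf with hMdef
  have hM0 : M ≠ 0 := by omega
  set ζ : ℂ := Complex.exp (2 * Real.pi * Complex.I / M) with hζdef
  have hζ : IsPrimitiveRoot ζ M := Complex.isPrimitiveRoot_exp M hM0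
  have hζM : ζ ^ M = 1 := hζ.pow_eq_one
  have hnorm : ‖ζ‖ = 1 := hζ.norm'_eq_one hM0
  have hζne : ζ ≠ 0 := by
    intro h; rw [h] at hnorm; simp at hnorm
  have hconj : (starRingEnd ℂ) ζ = ζ ^ (M - 1) := by
    have h1 : ζ * ζ ^ (M - 1) = 1 := by
      rw [← pow_succ']
      have h2 : M - 1 + 1 = M := by omega
      rw [h2, hζM]
    rw [← Complex.inv_eq_conj hnorm]
    exact inv_eq_of_mul_eq_one_right h1
  -- the linear maps w ↦ Σ_n ζ^{kn} ℓ_n(w)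
  set L : ℕ → (Fin N → ℂ) →ₗ[ℝ] ℂ := fun k =>
    (∑ n : Fin Nf, ((ζ ^ (n : ℕ)) ^ k) • ℓ n).restrictScalars ℝ with hLdef
  have hLapp : ∀ k w, L k w = ∑ n : Fin Nf, (ζ ^ (n : ℕ)) ^ k * ℓ n w := by
    intro k w
    simp [hLdef, LinearMap.sum_apply, smul_eq_mul]
  -- geometric sum lemma
  have geom : ∀ s t : ℕ, s ≤ M - 2 → t ≤ M - 2 →
      (∑ k ∈ Finset.range M, (ζ ^ s * ((starRingEnd ℂ) ζ) ^ t) ^ k)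
        = if s = t then (M : ℂ) else 0 := by
    intro s t hs ht
    have hu : ζ ^ s * ((starRingEnd ℂ) ζ) ^ t = ζ ^ (s + (M - 1) * t) := by
      rw [hconj, pow_add, pow_mul]
    by_cases hst : s = t
    · subst hst
      have h3 : s + (M - 1) * s = (1 + (M - 1)) * s := by ring
      have h4 : 1 + (M - 1) = M := by omega
      rw [if_pos rfl, hu, h3, h4, pow_mul, hζM, one_pow]
      simp
    · rw [if_neg hst, hu]
      have huM : (ζ ^ (s + (M - 1) * t)) ^ M = 1 := by
        rw [← pow_mul, mul_comm, pow_mul, hζM, one_pow]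
      have hune : ζ ^ (s + (M - 1) * t) ≠ 1 := by
        intro h1
        have hdvd : M ∣ s + (M - 1) * t := (hζ.pow_eq_one_iff_dvd _).mp h1
        have hdvdZ : (M : ℤ) ∣ (s : ℤ) + ((M : ℤ) - 1) * t := by
          have h5 := Int.natCast_dvd_natCast.mpr hdvd
          push_cast [Nat.cast_sub (by omega : 1 ≤ M)] at h5
          exact h5
        have hdvd2 : (M : ℤ) ∣ (s : ℤ) - t := by
          have h2 : (s : ℤ) - t = ((s : ℤ) + ((M : ℤ) - 1) * t) - M * t := by ring
          rw [h2]
          exact dvd_sub hdvdZ ⟨t, rfl⟩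
        have habs : |(s : ℤ) - (t : ℤ)| < (M : ℤ) := by
          rw [abs_sub_lt_iff]
          constructor <;> omega
        have h6 := Int.eq_zero_of_abs_lt_dvd hdvd2 habs
        apply hst
        omega
      rw [geom_sum_eq hune, huM]
      simp
  -- the key identity
  have key : ∀ w : Fin N → ℂ,
      (∑ n₀ : Fin Nf, ∑ n₁ : Fin Nf, ∑ n₂ : Fin Nf, ∑ n₃ : Fin Nf,
          if (n₀ : ℕ) + (n₁ : ℕ) = (n₂ : ℕ) + (n₃ : ℕ) then
            (ℓ n₀ w * ℓ n₁ w * (starRingEnd ℂ) (ℓ n₂ w) *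
              (starRingEnd ℂ) (ℓ n₃ w)).re
          else 0)
        = ∑ k ∈ Finset.range M, (M : ℝ)⁻¹ * ‖L k w‖ ^ 4 := by
    intro w
    -- complex identity
    have hC : (∑ k ∈ Finset.range M,
        (L k w * L k w * (starRingEnd ℂ) (L k w) * (starRingEnd ℂ) (L k w)))
        = (M : ℂ) * ∑ n₀ : Fin Nf, ∑ n₁ : Fin Nf, ∑ n₂ : Fin Nf, ∑ n₃ : Fin Nf,
          if (n₀ : ℕ) + (n₁ : ℕ) = (n₂ : ℕ) + (n₃ : ℕ) then
            (ℓ n₀ w * ℓ n₁ w * (starRingEnd ℂ) (ℓ n₂ w) *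
              (starRingEnd ℂ) (ℓ n₃ w))
          else 0 := by
      have expand : ∀ k, L k w * L k w * (starRingEnd ℂ) (L k w) *
          (starRingEnd ℂ) (L k w)
          = ∑ n₀ : Fin Nf, ∑ n₁ : Fin Nf, ∑ n₂ : Fin Nf, ∑ n₃ : Fin Nf,
            (ℓ n₀ w * ℓ n₁ w * (starRingEnd ℂ) (ℓ n₂ w) *
              (starRingEnd ℂ) (ℓ n₃ w))
            * (ζ ^ ((n₀ : ℕ) + (n₁ : ℕ))
                * ((starRingEnd ℂ) ζ) ^ ((n₂ : ℕ) + (n₃ : ℕ))) ^ k := by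
        intro k
        have prod4 : ∀ F G H K : Fin Nf → ℂ,
            (∑ n : Fin Nf, F n) * (∑ n : Fin Nf, G n) * (∑ n : Fin Nf, H n) *
              (∑ n : Fin Nf, K n)
            = ∑ n₀ : Fin Nf, ∑ n₁ : Fin Nf, ∑ n₂ : Fin Nf, ∑ n₃ : Fin Nf,
              F n₀ * G n₁ * H n₂ * K n₃ := by
          intro F G H K
          rw [Finset.sum_mul_sum, Finset.sum_mul, Finset.sum_mul]
          refine Finset.sum_congr rfl fun n₀ _ => ?_
          rw [Finset.sum_mul, Finset.sum_mul]
          refine Finset.sum_congr rfl fun n₁ _ => ?_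
          rw [mul_assoc, Finset.sum_mul_sum, Finset.mul_sum]
          refine Finset.sum_congr rfl fun n₂ _ => ?_
          rw [Finset.mul_sum]
          exact Finset.sum_congr rfl fun n₃ _ => by ring
        have hconjL : (starRingEnd ℂ) (L k w)
            = ∑ n : Fin Nf, ((starRingEnd ℂ) ζ ^ (n : ℕ)) ^ k *
                (starRingEnd ℂ) (ℓ n w) := by
          rw [hLapp, map_sum]
          exact Finset.sum_congr rfl fun n _ => by rw [map_mul, map_pow, map_pow]
        rw [hconjL, hLapp, prod4]
        refine Finset.sum_congr rfl fun n₀ _ => ?_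
        refine Finset.sum_congr rfl fun n₁ _ => ?_
        refine Finset.sum_congr rfl fun n₂ _ => ?_
        refine Finset.sum_congr rfl fun n₃ _ => ?_
        rw [mul_pow, pow_add, pow_add, mul_pow, mul_pow]
        ring
      calc (∑ k ∈ Finset.range M,
          (L k w * L k w * (starRingEnd ℂ) (L k w) * (starRingEnd ℂ) (L k w)))
          = ∑ k ∈ Finset.range M, ∑ n₀ : Fin Nf, ∑ n₁ : Fin Nf, ∑ n₂ : Fin Nf,
              ∑ n₃ : Fin Nf,
              (ℓ n₀ w * ℓ n₁ w * (starRingEnd ℂ) (ℓ n₂ w) *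
                (starRingEnd ℂ) (ℓ n₃ w))
              * (ζ ^ ((n₀ : ℕ) + (n₁ : ℕ))
                  * ((starRingEnd ℂ) ζ) ^ ((n₂ : ℕ) + (n₃ : ℕ))) ^ k := by
            exact Finset.sum_congr rfl fun k _ => expand k
        _ = (M : ℂ) * ∑ n₀ : Fin Nf, ∑ n₁ : Fin Nf, ∑ n₂ : Fin Nf, ∑ n₃ : Fin Nf,
            if (n₀ : ℕ) + (n₁ : ℕ) = (n₂ : ℕ) + (n₃ : ℕ) then
              (ℓ n₀ w * ℓ n₁ w * (starRingEnd ℂ) (ℓ n₂ w) *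
                (starRingEnd ℂ) (ℓ n₃ w))
            else 0 := by
            rw [Finset.mul_sum, Finset.sum_comm]
            refine Finset.sum_congr rfl fun n₀ _ => ?_
            rw [Finset.mul_sum, Finset.sum_comm]
            refine Finset.sum_congr rfl fun n₁ _ => ?_
            rw [Finset.mul_sum, Finset.sum_comm]
            refine Finset.sum_congr rfl fun n₂ _ => ?_
            rw [Finset.mul_sum, Finset.sum_comm]
            refine Finset.sum_congr rfl fun n₃ _ => ?_
            rw [← Finset.mul_sum, geom ((n₀ : ℕ) + n₁) ((n₂ : ℕ) + n₃)
              (by have := n₀.isLt; have := n₁.isLt; omega)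
              (by have := n₂.isLt; have := n₃.isLt; omega)]
            split_ifs <;> ring
    -- take real parts
    have hnormsq : ∀ z : ℂ, (z * z * (starRingEnd ℂ) z * (starRingEnd ℂ) z).re
        = ‖z‖ ^ 4 := by
      intro z
      have h1 : z * z * (starRingEnd ℂ) z * (starRingEnd ℂ) z
          = ((Complex.normSq z : ℝ) : ℂ) ^ 2 := by
        rw [← Complex.mul_conj]
        ring
      rw [h1]
      have : (((Complex.normSq z : ℝ) : ℂ) ^ 2) = (((Complex.normSq z ^ 2 : ℝ)) : ℂ) := by
        push_cast; ring
      rw [this, Complex.ofReal_re, Complex.normSq_eq_norm_sq]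
      ring
    have hre := congrArg Complex.re hC
    rw [Complex.re_sum] at hre
    simp only [hnormsq] at hre
    have hMre : ((M : ℂ) * ∑ n₀ : Fin Nf, ∑ n₁ : Fin Nf, ∑ n₂ : Fin Nf,
        ∑ n₃ : Fin Nf,
          if (n₀ : ℕ) + (n₁ : ℕ) = (n₂ : ℕ) + (n₃ : ℕ) then
            (ℓ n₀ w * ℓ n₁ w * (starRingEnd ℂ) (ℓ n₂ w) *
              (starRingEnd ℂ) (ℓ n₃ w))
          else 0).re
        = (M : ℝ) * ∑ n₀ : Fin Nf, ∑ n₁ : Fin Nf, ∑ n₂ : Fin Nf, ∑ n₃ : Fin Nf,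
          if (n₀ : ℕ) + (n₁ : ℕ) = (n₂ : ℕ) + (n₃ : ℕ) then
            (ℓ n₀ w * ℓ n₁ w * (starRingEnd ℂ) (ℓ n₂ w) *
              (starRingEnd ℂ) (ℓ n₃ w)).re
          else 0 := by
      rw [Complex.mul_re]
      simp only [Complex.natCast_re, Complex.natCast_im, zero_mul, sub_zero]
      congr 1
      rw [Complex.re_sum]
      refine Finset.sum_congr rfl fun n₀ _ => ?_
      rw [Complex.re_sum]
      refine Finset.sum_congr rfl fun n₁ _ => ?_
      rw [Complex.re_sum]
      refine Finset.sum_congr rfl fun n₂ _ => ?_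
      rw [Complex.re_sum]
      refine Finset.sum_congr rfl fun n₃ _ => ?_
      split_ifs <;> simp
    rw [hMre] at hre
    have hMne : (M : ℝ) ≠ 0 := by positivity
    rw [← Finset.mul_sum, hre, ← mul_assoc, inv_mul_cancel₀ hMne, one_mul]
  -- convexity
  have hconv : ∀ k ∈ Finset.range M,
      ConvexOn ℝ Set.univ (fun w : Fin N → ℂ => (M : ℝ)⁻¹ * ‖L k w‖ ^ 4) := by
    intro k _
    have h4 : ConvexOn ℝ Set.univ (fun w : Fin N → ℂ => ‖L k w‖ ^ 4) := by
      refine ⟨convex_univ, fun x _ y _ a b ha hb hab => ?_⟩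
      have h1 : ‖L k (a • x + b • y)‖ ≤ a * ‖L k x‖ + b * ‖L k y‖ := by
        rw [map_add, map_smul, map_smul]
        refine (norm_add_le _ _).trans ?_
        rw [norm_smul, norm_smul, Real.norm_eq_abs, Real.norm_eq_abs,
          _root_.abs_of_nonneg ha, _root_.abs_of_nonneg hb]
      have h2 : ‖L k (a • x + b • y)‖ ^ 4 ≤ (a * ‖L k x‖ + b * ‖L k y‖) ^ 4 :=
        pow_le_pow_left₀ (norm_nonneg _) h1 4
      refine h2.trans ?_
      have h3 := (convexOn_pow (𝕜 := ℝ) 4).2 (Set.mem_Ici.mpr (norm_nonneg (L k x)))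
        (Set.mem_Ici.mpr (norm_nonneg (L k y))) ha hb hab
      simpa [smul_eq_mul] using h3
    have := h4.smul (c := (M : ℝ)⁻¹) (by positivity)
    simpa [smul_eq_mul] using this
  have hsum : ConvexOn ℝ Set.univ
      (fun w : Fin N → ℂ => ∑ k ∈ Finset.range M, (M : ℝ)⁻¹ * ‖L k w‖ ^ 4) :=
    aux_convexOn_sum (Finset.range M) _ hconv
  have heq : (fun w : Fin N → ℂ =>
      ∑ n₀ : Fin Nf, ∑ n₁ : Fin Nf, ∑ n₂ : Fin Nf, ∑ n₃ : Fin Nf,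
        if (n₀ : ℕ) + (n₁ : ℕ) = (n₂ : ℕ) + (n₃ : ℕ) then
          (ℓ n₀ w * ℓ n₁ w * (starRingEnd ℂ) (ℓ n₂ w) *
            (starRingEnd ℂ) (ℓ n₃ w)).re
        else 0)
      = fun w => ∑ k ∈ Finset.range M, (M : ℝ)⁻¹ * ‖L k w‖ ^ 4 :=
    funext key
  rw [heq]
  exact hsum
end
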